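/- (Residual identity for kernelized ResDMD, Section 4.3) Suppose Q̂ ∈ ℂ^{M×r} with Q̂ᴴ Q̂ = I_r, Ẑ ∈ ℂ^{N×r} with Ẑᴴ Ẑ = I_r, and Σ̂ ∈ ℂ^{r×r} invertible and Hermitian satisfy (Ŵ Ψ_X)ᴴ Q̂ = Ẑ Σ̂. Define Ψ̂_X = (Ŵ Ψ_X)ᴴ Q̂ Σ̂⁻¹, Ψ̂_Y = (Ŵ Ψ_Y)ᴴ Q̂ Σ̂⁻¹, K̂ = Σ̂⁻¹ Q̂ᴴ (Ŵ Ψ_Y)(Ŵ Ψ_X)ᴴ Q̂ Σ̂⁻¹, and L̂ = (Q̂ Σ̂⁻¹)ᴴ (Ŵ Ψ_Y)(Ŵ Ψ_Y)ᴴ (Q̂ Σ̂⁻¹). Then for every λ ∈ ℂ and every v ∈ ℂ^r: (i) ‖Ψ̂_X v‖ = ‖v‖, and (ii) ‖Ψ̂_Y v − λ̄ Ψ̂_X v‖² = vᴴ [L̂ − λ K̂ᴴ − λ̄ K̂ + |λ|² I_r] v. -/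

import Mathlib

/-! Since `(W Ψ_X)ᴴ Q̂ Σ̂⁻¹ = Ẑ`, the matrix `Ψ̂_X` has orthonormal columns, which gives (i).
The Gram matrices of `Ψ̂_Y, Ψ̂_X` are `L̂`, `K̂` and `K̂ᴴ` (using `Σ̂⁻ᴴ = Σ̂⁻¹`), and expanding the
square of `Ψ̂_Y v − λ̄ Ψ̂_X v` as a Hermitian form gives (ii). -/

open Matrix

/-- The Euclidean (ℓ²) norm of a complex vector. -/
noncomputable def euclidEnorm {n : ℕ} (x : Fin n → ℂ) : ℝ :=
  Real.sqrt (∑ i, ‖x i‖ ^ 2)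

theorem euclidEnorm_sq_eq_dotProduct {n : ℕ} (x : Fin n → ℂ) :
    ((euclidEnorm x ^ 2 : ℝ) : ℂ) = star x ⬝ᵥ x := by
  rw [euclidEnorm, Real.sq_sqrt (by positivity)]
  push_cast
  refine Finset.sum_congr rfl fun i _ => ?_
  rw [Pi.star_apply, Complex.star_def, mul_comm, Complex.mul_conj']

theorem euclidEnorm_mulVec_of_conjTranspose_mul_self {m n : ℕ} {A : Matrix (Fin m) (Fin n) ℂ}
    (hA : Aᴴ * A = 1) (v : Fin n → ℂ) : euclidEnorm (A *ᵥ v) = euclidEnorm v := by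
  have hsq : ((euclidEnorm (A *ᵥ v) ^ 2 : ℝ) : ℂ) = ((euclidEnorm v ^ 2 : ℝ) : ℂ) := by
    rw [euclidEnorm_sq_eq_dotProduct, euclidEnorm_sq_eq_dotProduct, star_mulVec,
      dotProduct_mulVec, vecMul_vecMul, hA, vecMul_one]
  exact (pow_left_inj₀ (Real.sqrt_nonneg _) (Real.sqrt_nonneg _) two_ne_zero).1
    (by exact_mod_cast hsq)

theorem star_mulVec_dotProduct_mulVec {m n α : Type*} [Fintype m] [Fintype n] [CommSemiring α]
    [StarRing α] (A B : Matrix m n α) (v w : n → α) :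
    star (A *ᵥ v) ⬝ᵥ (B *ᵥ w) = star v ⬝ᵥ ((Aᴴ * B) *ᵥ w) := by
  rw [star_mulVec, dotProduct_mulVec, dotProduct_mulVec, vecMul_vecMul]

theorem star_sub_smul_mulVec_dotProduct {m n : Type*} [Fintype m] [Fintype n]
    (A B : Matrix m n ℂ) (l : ℂ) (v : n → ℂ) :
    star (B *ᵥ v - starRingEnd ℂ l • (A *ᵥ v)) ⬝ᵥ (B *ᵥ v - starRingEnd ℂ l • (A *ᵥ v)) =
      star v ⬝ᵥ ((Bᴴ * B - l • (Aᴴ * B) - starRingEnd ℂ l • (Bᴴ * A)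
        + ((‖l‖ ^ 2 : ℝ) : ℂ) • (Aᴴ * A)) *ᵥ v) := by
  have hnorm : ((‖l‖ ^ 2 : ℝ) : ℂ) = l * starRingEnd ℂ l := by
    rw [Complex.mul_conj']; push_cast; ring
  have hstar : star (starRingEnd ℂ l) = l := Complex.conj_conj l
  simp only [star_sub, star_smul, hstar, sub_dotProduct, dotProduct_sub, smul_dotProduct,
    dotProduct_smul, star_mulVec_dotProduct_mulVec, sub_mulVec, add_mulVec, smul_mulVec,
    dotProduct_add, smul_eq_mul, hnorm]
  ring

theorem kernelized_ResDMD_residual_identity_general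
    {M N r : ℕ}
    (PsiX PsiY : Matrix (Fin M) (Fin N) ℂ)
    (W : Matrix (Fin M) (Fin M) ℂ)
    (Qh : Matrix (Fin M) (Fin r) ℂ)
    (Zh : Matrix (Fin N) (Fin r) ℂ) (hZ : Zhᴴ * Zh = 1)
    (Sh : Matrix (Fin r) (Fin r) ℂ) (hSH : Shᴴ = Sh) (hS : IsUnit Sh.det)
    (hSVD : (W * PsiX)ᴴ * Qh = Zh * Sh)
    (PsihX PsihY : Matrix (Fin N) (Fin r) ℂ)
    (hPsihX : PsihX = (W * PsiX)ᴴ * Qh * Sh⁻¹)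
    (hPsihY : PsihY = (W * PsiY)ᴴ * Qh * Sh⁻¹)
    (Khat : Matrix (Fin r) (Fin r) ℂ)
    (hKhat : Khat = Sh⁻¹ * Qhᴴ * (W * PsiY) * (W * PsiX)ᴴ * Qh * Sh⁻¹)
    (Lhat : Matrix (Fin r) (Fin r) ℂ)
    (hLhat : Lhat = (Qh * Sh⁻¹)ᴴ * (W * PsiY) * (W * PsiY)ᴴ * (Qh * Sh⁻¹))
    (l : ℂ) (v : Fin r → ℂ) :
    euclidEnorm (PsihX *ᵥ v) = euclidEnorm v ∧
      ((euclidEnorm (PsihY *ᵥ v - (starRingEnd ℂ) l • (PsihX *ᵥ v)) ^ 2 : ℝ) : ℂ) =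
        star v ⬝ᵥ
          ((Lhat - l • Khatᴴ - (starRingEnd ℂ) l • Khat + ((‖l‖ ^ 2 : ℝ) : ℂ) • 1) *ᵥ v) := by
  have hSinv : Sh⁻¹ᴴ = Sh⁻¹ := by rw [conjTranspose_nonsing_inv, hSH]
  have hXX : PsihXᴴ * PsihX = 1 := by
    rw [hPsihX, hSVD, Matrix.mul_assoc, mul_nonsing_inv _ hS, Matrix.mul_one, hZ]
  have hYY : PsihYᴴ * PsihY = Lhat := by
    simp only [hPsihY, hLhat, conjTranspose_mul, conjTranspose_conjTranspose, hSinv,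
      Matrix.mul_assoc]
  have hYX : PsihYᴴ * PsihX = Khat := by
    simp only [hPsihY, hPsihX, hKhat, conjTranspose_mul, conjTranspose_conjTranspose, hSinv,
      Matrix.mul_assoc]
  have hXY : PsihXᴴ * PsihY = Khatᴴ := by
    rw [← hYX, conjTranspose_mul, conjTranspose_conjTranspose]
  refine ⟨euclidEnorm_mulVec_of_conjTranspose_mul_self hXX v, ?_⟩
  rw [euclidEnorm_sq_eq_dotProduct, star_sub_smul_mulVec_dotProduct, hYY, hXY, hYX, hXX]

/-- (Residual identity for kernelized ResDMD, Section 4.3.) For every `λ ∈ ℂ` and `v ∈ ℂ^r`: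
(i) `‖Ψ̂_X v‖ = ‖v‖`, and (ii)
`‖Ψ̂_Y v − λ̄ Ψ̂_X v‖² = vᴴ [L̂ − λ K̂ᴴ − λ̄ K̂ + |λ|² I_r] v`. -/
theorem kernelized_ResDMD_residual_identity
    {M N r : ℕ}
    (PsiX PsiY : Matrix (Fin M) (Fin N) ℂ)
    (W : Matrix (Fin M) (Fin M) ℂ)
    (Qh : Matrix (Fin M) (Fin r) ℂ) (hQ : Qhᴴ * Qh = 1)
    (Zh : Matrix (Fin N) (Fin r) ℂ) (hZ : Zhᴴ * Zh = 1)
    (Sh : Matrix (Fin r) (Fin r) ℂ) (hSH : Shᴴ = Sh) (hS : IsUnit Sh.det)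
    (hSVD : (W * PsiX)ᴴ * Qh = Zh * Sh)
    (PsihX PsihY : Matrix (Fin N) (Fin r) ℂ)
    (hPsihX : PsihX = (W * PsiX)ᴴ * Qh * Sh⁻¹)
    (hPsihY : PsihY = (W * PsiY)ᴴ * Qh * Sh⁻¹)
    (Khat : Matrix (Fin r) (Fin r) ℂ)
    (hKhat : Khat = Sh⁻¹ * Qhᴴ * (W * PsiY) * (W * PsiX)ᴴ * Qh * Sh⁻¹)
    (Lhat : Matrix (Fin r) (Fin r) ℂ)
    (hLhat : Lhat = (Qh * Sh⁻¹)ᴴ * (W * PsiY) * (W * PsiY)ᴴ * (Qh * Sh⁻¹))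
    (l : ℂ) (v : Fin r → ℂ) :
    euclidEnorm (PsihX *ᵥ v) = euclidEnorm v ∧
      ((euclidEnorm (PsihY *ᵥ v - (starRingEnd ℂ) l • (PsihX *ᵥ v)) ^ 2 : ℝ) : ℂ) =
        star v ⬝ᵥ
          ((Lhat - l • Khatᴴ - (starRingEnd ℂ) l • Khat + ((‖l‖ ^ 2 : ℝ) : ℂ) • 1) *ᵥ v) :=
  kernelized_ResDMD_residual_identity_general PsiX PsiY W Qh Zh hZ Sh hSH hS hSVD PsihX PsihY hPsihX
    hPsihY Khat hKhat Lhat hLhat l v
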